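/- Let V have basis {ψ_m : m ∈ ℤ} with operators Â ψ_m = m ψ_m, Ĉ₊ ψ_m = (m + 1/2) ψ_{m+1}, Ĉ₋ ψ_m = (m − 1/2) ψ_{m−1}. Then an inner product on V making Â self-adjoint and Ĉ₊† = Ĉ₋ exists, is unique up to an overall positive scale, and in it {ψ_m} is orthogonal with all norms equal. -/

import Mathlib

open scoped BigOperators

/-- The operator Â on V = span{ψ_m : m ∈ ℤ} (realised as ℤ →₀ ℂ),
Â ψ_m = m ψ_m. -/
noncomputable def Aop : (ℤ →₀ ℂ) →ₗ[ℂ] (ℤ →₀ ℂ) :=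
  Finsupp.lsum ℂ fun m : ℤ => (m : ℂ) • Finsupp.lsingle m

/-- Ĉ₊ ψ_m = (m + 1/2) ψ_{m+1}. -/
noncomputable def Cp : (ℤ →₀ ℂ) →ₗ[ℂ] (ℤ →₀ ℂ) :=
  Finsupp.lsum ℂ fun m : ℤ => ((m : ℂ) + 1/2) • Finsupp.lsingle (m + 1)

/-- Ĉ₋ ψ_m = (m − 1/2) ψ_{m−1}. -/
noncomputable def Cm : (ℤ →₀ ℂ) →ₗ[ℂ] (ℤ →₀ ℂ) :=
  Finsupp.lsum ℂ fun m : ℤ => ((m : ℂ) - 1/2) • Finsupp.lsingle (m - 1)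

/-- Basis vector ψ_m. -/
noncomputable def ψ (m : ℤ) : ℤ →₀ ℂ := Finsupp.single m 1

/-- B is a (positive definite Hermitian sesquilinear) inner product on V. -/
def IsInnerProduct (B : (ℤ →₀ ℂ) → (ℤ →₀ ℂ) → ℂ) : Prop :=
  (∀ x y z, B (x + y) z = B x z + B y z) ∧
  (∀ x y z, B x (y + z) = B x y + B x z) ∧
  (∀ (c : ℂ) x y, B (c • x) y = (starRingEnd ℂ) c * B x y) ∧
  (∀ (c : ℂ) x y, B x (c • y) = c * B x y) ∧
  (∀ x y, B x y = (starRingEnd ℂ) (B y x)) ∧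
  (∀ x, x ≠ 0 → 0 < (B x x).re)

/-!
Self-adjointness of `Aop` on `ψ m, ψ n` gives `(m - n) ⟪ψ m, ψ n⟫ = 0`, and `Cp† = Cm` on
`ψ m, ψ (m + 1)` gives `(m + 1/2) ⟪ψ (m + 1), ψ (m + 1)⟫ = (m + 1/2) ⟪ψ m, ψ m⟫` with
`m + 1/2 ≠ 0`; so the basis is orthogonal with constant norm. Conversely, pulling back the inner
product of `ℓ²(ℤ)` along `ψ m ↦ eₘ` makes `{ψ m}` orthonormal, and both adjoint relations then
only need to be checked on basis vectors.
-/

lemma Aop_ψ (m : ℤ) : Aop (ψ m) = (m : ℂ) • ψ m := by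
  simp [Aop, ψ]

lemma Cp_ψ (m : ℤ) : Cp (ψ m) = ((m : ℂ) + 1/2) • ψ (m + 1) := by
  simp [Cp, ψ]

lemma Cm_ψ (m : ℤ) : Cm (ψ m) = ((m : ℂ) - 1/2) • ψ (m - 1) := by
  simp [Cm, ψ]

lemma ψ_ne_zero (m : ℤ) : ψ m ≠ 0 :=
  Finsupp.single_ne_zero.mpr one_ne_zero

lemma int_add_half_ne_zero (m : ℤ) : (m : ℂ) + 1/2 ≠ 0 := by
  have h : ((2 * m + 1 : ℤ) : ℂ) ≠ 0 := Int.cast_ne_zero.mpr (by omega)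
  contrapose! h
  push_cast
  linear_combination 2 * h

lemma conj_int_add_half (m : ℤ) : (starRingEnd ℂ) ((m : ℂ) + 1/2) = (m : ℂ) + 1/2 := by
  simp [map_ofNat]

section Existence

variable {E : Type*} [NormedAddCommGroup E] [InnerProductSpace ℂ E]

lemma isInnerProduct_inner_comp {f : (ℤ →₀ ℂ) →ₗ[ℂ] E} (hf : Function.Injective f) :
    IsInnerProduct fun x y => inner ℂ (f x) (f y) := by
  refine ⟨?_, ?_, ?_, ?_, ?_, ?_⟩
  · intro x y z; simp only [map_add, inner_add_left]
  · intro x y z; simp only [map_add, inner_add_right]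
  · intro c x y; simp only [map_smul, inner_smul_left]
  · intro c x y; simp only [map_smul, inner_smul_right]
  · intro x y; exact (inner_conj_symm _ _).symm
  · intro x hx
    simp only [inner_self_eq_norm_sq_to_K]
    norm_cast
    exact pow_pos (norm_pos_iff.mpr ((map_ne_zero_iff f hf).mpr hx)) 2

lemma inner_linearCombination_ψ {v : ℤ → E} (hv : Orthonormal ℂ v) (m n : ℤ) :
    inner ℂ (Finsupp.linearCombination ℂ v (ψ m)) (Finsupp.linearCombination ℂ v (ψ n)) =
      if m = n then 1 else 0 := by
  simp only [ψ, Finsupp.linearCombination_single, one_smul]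
  exact orthonormal_iff_ite.mp hv m n

end Existence

lemma exists_isInnerProduct_orthonormal_ψ :
    ∃ B, IsInnerProduct B ∧ ∀ m n, B (ψ m) (ψ n) = if m = n then 1 else 0 :=
  have hv := (default : HilbertBasis ℤ ℂ (lp (fun _ : ℤ => ℂ) 2)).orthonormal
  ⟨_, isInnerProduct_inner_comp hv.linearIndependent, inner_linearCombination_ψ hv⟩

namespace IsInnerProduct

variable {B : (ℤ →₀ ℂ) → (ℤ →₀ ℂ) → ℂ} (hB : IsInnerProduct B)
include hB

lemma smul_left (c : ℂ) (x y : ℤ →₀ ℂ) : B (c • x) y = (starRingEnd ℂ) c * B x y :=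
  hB.2.2.1 c x y

lemma smul_right (c : ℂ) (x y : ℤ →₀ ℂ) : B x (c • y) = c * B x y :=
  hB.2.2.2.1 c x y

lemma re_pos {x : ℤ →₀ ℂ} (hx : x ≠ 0) : 0 < (B x x).re :=
  hB.2.2.2.2.2 x hx

lemma ofReal_re_self (x : ℤ →₀ ℂ) : ((B x x).re : ℂ) = B x x :=
  Complex.conj_eq_iff_re.mp (hB.2.2.2.2.1 x x).symm

noncomputable def toSesqForm : (ℤ →₀ ℂ) →ₗ⋆[ℂ] (ℤ →₀ ℂ) →ₗ[ℂ] ℂ :=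
  LinearMap.mk₂'ₛₗ _ _ B hB.1 hB.2.2.1 hB.2.1 hB.2.2.2.1

lemma adjoint_of_ψ {S T : (ℤ →₀ ℂ) →ₗ[ℂ] (ℤ →₀ ℂ)}
    (h : ∀ m n, B (S (ψ m)) (ψ n) = B (ψ m) (T (ψ n))) (x y : ℤ →₀ ℂ) :
    B (S x) y = B x (T y) := by
  have := LinearMap.ext_basis (B := hB.toSesqForm.comp S) (B' := hB.toSesqForm.compl₂ T)
    Finsupp.basisSingleOne Finsupp.basisSingleOne (fun m n => h m n)
  exact LinearMap.congr_fun₂ this x y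

section Orthonormal

variable (hψ : ∀ m n, B (ψ m) (ψ n) = if m = n then 1 else 0)
include hψ

lemma adjoint_Aop_of_orthonormal (x y : ℤ →₀ ℂ) : B (Aop x) y = B x (Aop y) := by
  refine hB.adjoint_of_ψ (fun m n => ?_) x y
  rw [Aop_ψ, Aop_ψ, hB.smul_left, hB.smul_right, hψ, map_intCast]
  split_ifs with h
  · rw [h]
  · simp

lemma adjoint_Cp_of_orthonormal (x y : ℤ →₀ ℂ) : B (Cp x) y = B x (Cm y) := by
  refine hB.adjoint_of_ψ (fun m n => ?_) x y
  rw [Cp_ψ, Cm_ψ, hB.smul_left, hB.smul_right, hψ, hψ]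
  by_cases h : m + 1 = n
  · subst h
    rw [if_pos rfl, if_pos (add_sub_cancel_right m 1).symm, conj_int_add_half]
    push_cast
    ring
  · rw [if_neg h, if_neg (by omega), mul_zero, mul_zero]

end Orthonormal

lemma apply_ψ_eq_zero_of_ne (hA : ∀ x y, B (Aop x) y = B x (Aop y)) {m n : ℤ} (h : m ≠ n) :
    B (ψ m) (ψ n) = 0 := by
  have hAmn := hA (ψ m) (ψ n)
  rw [Aop_ψ, Aop_ψ, hB.smul_left, hB.smul_right, map_intCast] at hAmn
  have hmn : (m : ℂ) - n ≠ 0 := sub_ne_zero.mpr (Int.cast_injective.ne h)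
  have hprod : ((m : ℂ) - n) * B (ψ m) (ψ n) = 0 := by linear_combination hAmn
  exact (mul_eq_zero.mp hprod).resolve_left hmn

lemma apply_ψ_self_eq (hC : ∀ x y, B (Cp x) y = B x (Cm y)) (m : ℤ) :
    B (ψ m) (ψ m) = B (ψ 0) (ψ 0) := by
  have step (k : ℤ) : B (ψ (k + 1)) (ψ (k + 1)) = B (ψ k) (ψ k) := by
    have hk : ((k + 1 : ℤ) : ℂ) - 1/2 = k + 1/2 := by push_cast; ring
    have hCk := hC (ψ k) (ψ (k + 1))
    rw [Cp_ψ, Cm_ψ, hB.smul_left, hB.smul_right, add_sub_cancel_right, conj_int_add_half,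
      hk] at hCk
    exact mul_left_cancel₀ (int_add_half_ne_zero k) hCk
  induction m using Int.induction_on with
  | zero => rfl
  | succ k ih => rw [step, ih]
  | pred k ih => rw [← ih, ← step (-k - 1), sub_add_cancel]

end IsInnerProduct

/-- There exists an inner product on V making Â self-adjoint and Ĉ₊† = Ĉ₋;
any such inner product makes {ψ_m} orthogonal with all norms equal, and is
unique up to an overall positive scale. -/
theorem inner_product_exists_unique :
    (∃ B : (ℤ →₀ ℂ) → (ℤ →₀ ℂ) → ℂ, IsInnerProduct B ∧
      (∀ x y, B (Aop x) y = B x (Aop y)) ∧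
      (∀ x y, B (Cp x) y = B x (Cm y))) ∧
    (∀ B : (ℤ →₀ ℂ) → (ℤ →₀ ℂ) → ℂ, IsInnerProduct B →
      (∀ x y, B (Aop x) y = B x (Aop y)) →
      (∀ x y, B (Cp x) y = B x (Cm y)) →
      ∃ c : ℝ, 0 < c ∧ ∀ m n : ℤ, B (ψ m) (ψ n) = if m = n then (c : ℂ) else 0) := by
  refine ⟨?_, fun B hB hA hC => ?_⟩
  · obtain ⟨B, hB, hψ⟩ := exists_isInnerProduct_orthonormal_ψ
    exact ⟨B, hB, hB.adjoint_Aop_of_orthonormal hψ, hB.adjoint_Cp_of_orthonormal hψ⟩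
  · refine ⟨(B (ψ 0) (ψ 0)).re, hB.re_pos (ψ_ne_zero 0), fun m n => ?_⟩
    split_ifs with h
    · rw [h, hB.apply_ψ_self_eq hC, hB.ofReal_re_self]
    · exact hB.apply_ψ_eq_zero_of_ne hA h
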